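/- Let n ≥ 2, let w > 0, and let D ∈ M_n(ℝ) be the symmetric matrix with zero diagonal and D_{ij} = 1/w for all i ≠ j (the complete graph with all weights equal to w). Then for all i ≠ j, the noncommutative distance satisfies d^D(i,j) = w·sqrt(2/n). -/

import Mathlib

open scoped ENNReal

/-- The operator norm on square matrices induced by the Euclidean (ℓ²) norm. -/
noncomputable def opNorm {ι : Type*} [Finite ι] (M : Matrix ι ι ℂ) : ℝ :=
  letI := Fintype.ofFinite ι
  letI := Classical.decEq ι
  ‖Matrix.toEuclideanCLM (𝕜 := ℂ) M‖

/-- The commutator `[D, π(a)]` of a matrix with the diagonal matrix of `a`. -/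
noncomputable def commD {ι : Type*} [Finite ι] (D : Matrix ι ι ℂ) (a : ι → ℂ) : Matrix ι ι ℂ :=
  letI := Fintype.ofFinite ι
  letI := Classical.decEq ι
  D * Matrix.diagonal a - Matrix.diagonal a * D

/-- Connes' noncommutative distance associated to the Dirac operator `D`. -/
noncomputable def ncDist {ι : Type*} [Finite ι] (D : Matrix ι ι ℂ) (i j : ι) : ℝ≥0∞ :=
  ⨆ (a : ι → ℂ) (_ : opNorm (commD D a) ≤ 1), ENNReal.ofReal ‖a i - a j‖

/-- The weight of an edge: the inverse of `|D i j|` (infinite if `D i j = 0`). -/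
noncomputable def eWeight {ι : Type*} (D : Matrix ι ι ℂ) (u v : ι) : ℝ≥0∞ :=
  (ENNReal.ofReal ‖D u v‖)⁻¹

/-- Adjacency in the graph `G_D`. -/
def Adjac {ι : Type*} (D : Matrix ι ι ℂ) (u v : ι) : Prop := u ≠ v ∧ D u v ≠ 0

/-- The length of a walk `i :: p` computed with weights `eWeight D`. -/
noncomputable def walkLength {ι : Type*} (D : Matrix ι ι ℂ) : ι → List ι → ℝ≥0∞
  | _, [] => 0
  | u, v :: rest => eWeight D u v + walkLength D v rest

/-- `i :: p` is a walk from `i` to `j` in the graph `G_D`. -/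
def IsWalk {ι : Type*} (D : Matrix ι ι ℂ) (i j : ι) (p : List ι) : Prop :=
  List.Chain (Adjac D) i p ∧ (i :: p).getLast (List.cons_ne_nil _ _) = j

/-- `i` and `j` lie in the same connected component of `G_D`. -/
def Conn {ι : Type*} (D : Matrix ι ι ℂ) (i j : ι) : Prop := ∃ p, IsWalk D i j p

/-- The geodesic (weighted shortest-path) distance on `G_D`. -/
noncomputable def gDist {ι : Type*} (D : Matrix ι ι ℂ) (i j : ι) : ℝ≥0∞ :=
  ⨅ (p : List ι) (_ : IsWalk D i j p), walkLength D i p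

/-!
With `c = 1/w` we have `D = c (J - 1)`, so `[D, π(a)] v = c (⟨a, v⟩ 𝟙 - (∑ v) a)`, where
`⟨a, v⟩ = ∑ₗ a l v l`. The test vector `v = eᵢ - eⱼ` is mapped to `c (a i - a j) 𝟙`, which gives
`n |c|² |a i - a j|² ≤ 2`. Conversely, for `a = t (eᵢ - eⱼ)` the image of `v` is
`c t ((v i - v j) 𝟙 - (∑ v) (eᵢ - eⱼ))`, a combination of the orthogonal vectors `𝟙` and
`eᵢ - eⱼ`, with squared norm `|c t|² (n |v i - v j|² + 2 |∑ v|²)`; and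
`|v i - v j|² / 2 + |∑ v|² / n ≤ ‖v‖²` (Bessel's inequality for the orthonormal pair
`𝟙 / √n`, `(eᵢ - eⱼ) / √2`). Hence this `a` is admissible as soon as `2 n |c t|² ≤ 1`, and then
`|a i - a j| = 2 |t|` attains the bound.
-/

open Finset Matrix

section Commutator

variable {ι : Type*} [Fintype ι] [DecidableEq ι]

theorem commD_apply (D : Matrix ι ι ℂ) (a : ι → ℂ) (k l : ι) :
    commD D a k l = D k l * (a l - a k) := by
  have : commD D a = D * diagonal a - diagonal a * D := by
    unfold commD; congr!
  rw [this, Matrix.sub_apply, mul_diagonal, diagonal_mul]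
  ring

theorem opNorm_le_one_iff (M : Matrix ι ι ℂ) :
    opNorm M ≤ 1 ↔ ∀ v : ι → ℂ, ∑ k, ‖(M *ᵥ v) k‖ ^ 2 ≤ ∑ k, ‖v k‖ ^ 2 := by
  have : opNorm M = ‖toEuclideanCLM (𝕜 := ℂ) M‖ := by
    unfold opNorm; congr!
  rw [this, ContinuousLinearMap.opNorm_le_iff zero_le_one,
    (WithLp.equiv 2 (ι → ℂ)).symm.forall_congr_left]
  refine forall_congr' fun v => ?_
  rw [one_mul, ← sq_le_sq₀ (norm_nonneg _) (norm_nonneg _), EuclideanSpace.norm_sq_eq,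
    EuclideanSpace.norm_sq_eq]
  simp

theorem commD_const_offDiag_mulVec (c : ℂ) (a v : ι → ℂ) (k : ι) :
    (commD (of fun k l => if k = l then 0 else c) a *ᵥ v) k
      = c * (∑ l, a l * v l - a k * ∑ l, v l) := by
  simp only [mulVec, dotProduct, commD_apply, of_apply, mul_sub, Finset.mul_sum,
    ← Finset.sum_sub_distrib]
  refine Finset.sum_congr rfl fun l _ => ?_
  split_ifs with hkl
  · simp [hkl]
  · ring

end Commutator

section MeanDeviation

variable {ι : Type*} [Fintype ι] {E : Type*} [NormedAddCommGroup E] [InnerProductSpace ℝ E]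

open scoped RealInnerProductSpace

theorem sum_norm_sub_sq (v : ι → E) (m : E) :
    ∑ k, ‖v k - m‖ ^ 2 = ∑ k, ‖v k‖ ^ 2 - 2 * ⟪∑ k, v k, m⟫ + Fintype.card ι * ‖m‖ ^ 2 := by
  simp only [norm_sub_sq_real, Finset.sum_add_distrib, Finset.sum_sub_distrib, sum_inner,
    ← Finset.mul_sum, Finset.sum_const, Finset.card_univ, nsmul_eq_mul]

theorem norm_sub_sq_div_two_add_norm_sum_sq_div_card_le (v : ι → E) {i j : ι} (hij : i ≠ j) :
    ‖v i - v j‖ ^ 2 / 2 + ‖∑ k, v k‖ ^ 2 / Fintype.card ι ≤ ∑ k, ‖v k‖ ^ 2 := by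
  classical
  have hcard : (0 : ℝ) < Fintype.card ι := Nat.cast_pos.mpr (Fintype.card_pos_iff.mpr ⟨i⟩)
  set S := ∑ k, v k
  set m := (Fintype.card ι : ℝ)⁻¹ • S
  have hmean : ∑ k, ‖v k - m‖ ^ 2 = ∑ k, ‖v k‖ ^ 2 - ‖S‖ ^ 2 / Fintype.card ι := by
    rw [sum_norm_sub_sq, real_inner_smul_right, real_inner_self_eq_norm_sq, norm_smul,
      Real.norm_of_nonneg (inv_nonneg.mpr hcard.le)]
    field_simp
    ring
  have hpair : ‖v i - v j‖ ^ 2 / 2 ≤ ‖v i - m‖ ^ 2 + ‖v j - m‖ ^ 2 := by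
    have := parallelogram_law_with_norm ℝ (v i - m) (v j - m)
    rw [sub_sub_sub_cancel_right] at this
    nlinarith [sq_nonneg ‖v i - m + (v j - m)‖]
  have hsub : ‖v i - m‖ ^ 2 + ‖v j - m‖ ^ 2 ≤ ∑ k, ‖v k - m‖ ^ 2 := by
    rw [← Finset.sum_pair (f := fun k => ‖v k - m‖ ^ 2) hij]
    exact Finset.sum_le_univ_sum_of_nonneg fun k => sq_nonneg _
  linarith

end MeanDeviation

section Dipole

variable {ι : Type*} [Fintype ι] [DecidableEq ι] {i j : ι}

theorem sum_mul_single_sub_single {R : Type*} [Ring R] (x : ι → R) :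
    ∑ l, x l * (Pi.single i 1 - Pi.single j 1 : ι → R) l = x i - x j := by
  simp [mul_sub, Finset.sum_sub_distrib, Pi.single_apply]

theorem sum_norm_sub_mul_single_sub_single_sq (x y : ℂ) (hij : i ≠ j) :
    ∑ k, ‖x - y * (Pi.single i 1 - Pi.single j 1 : ι → ℂ) k‖ ^ 2
      = Fintype.card ι * ‖x‖ ^ 2 + 2 * ‖y‖ ^ 2 := by
  have hoff : ∑ k, (‖x - y * (Pi.single i 1 - Pi.single j 1 : ι → ℂ) k‖ ^ 2 - ‖x‖ ^ 2)
      = 2 * ‖y‖ ^ 2 := by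
    rw [Fintype.sum_eq_add i j hij fun k hk => by simp [hk.1, hk.2]]
    have := parallelogram_law_with_norm ℝ x y
    simp only [Pi.sub_apply, Pi.single_eq_same, Pi.single_eq_of_ne hij, Pi.single_eq_of_ne hij.symm,
      sub_zero, zero_sub, mul_one, mul_neg, sub_neg_eq_add]
    linarith
  rw [← sub_eq_iff_eq_add', ← hoff, Finset.sum_sub_distrib]
  simp

end Dipole

section CompleteGraph

variable {ι : Type*} [Fintype ι] [DecidableEq ι] {i j : ι}

theorem card_mul_sq_le_two_of_opNorm_commD_le_one {c : ℂ} {a : ι → ℂ}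
    (ha : opNorm (commD (of fun k l => if k = l then 0 else c) a) ≤ 1) (hij : i ≠ j) :
    Fintype.card ι * (‖c‖ * ‖a i - a j‖) ^ 2 ≤ 2 := by
  set v : ι → ℂ := Pi.single i 1 - Pi.single j 1
  have hv : ∑ k, ‖v k‖ ^ 2 = 2 := by
    simpa [v, norm_sub_rev] using sum_norm_sub_mul_single_sub_single_sq (ι := ι) 0 1 hij
  have hCv : ∀ k, (commD (of fun k l => if k = l then 0 else c) a *ᵥ v) k = c * (a i - a j) := by
    intro k
    have hsum : ∑ l, v l = 0 := by simp [v, Finset.sum_sub_distrib]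
    rw [commD_const_offDiag_mulVec, sum_mul_single_sub_single, hsum, mul_zero, sub_zero]
  have := (opNorm_le_one_iff _).mp ha v
  simpa only [hCv, hv, Finset.sum_const, Finset.card_univ, nsmul_eq_mul, norm_mul, mul_pow]
    using this

theorem opNorm_commD_smul_single_sub_single_le_one {c t : ℂ}
    (hct : 2 * Fintype.card ι * (‖c‖ * ‖t‖) ^ 2 ≤ 1) (hij : i ≠ j) :
    opNorm (commD (of fun k l => if k = l then 0 else c) (t • (Pi.single i 1 - Pi.single j 1)))
      ≤ 1 := by
  rw [opNorm_le_one_iff]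
  intro v
  have hcard : (0 : ℝ) < Fintype.card ι := Nat.cast_pos.mpr (Fintype.card_pos_iff.mpr ⟨i⟩)
  have hCv : ∀ k, (commD (of fun k l => if k = l then 0 else c)
      (t • (Pi.single i 1 - Pi.single j 1)) *ᵥ v) k
        = c * t * ((v i - v j) - (∑ l, v l) * (Pi.single i 1 - Pi.single j 1 : ι → ℂ) k) := by
    intro k
    have : ∑ l, (t • (Pi.single i 1 - Pi.single j 1 : ι → ℂ)) l * v l = t * (v i - v j) := by
      rw [← sum_mul_single_sub_single v, Finset.mul_sum]
      refine Finset.sum_congr rfl fun l _ => ?_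
      rw [Pi.smul_apply, smul_eq_mul]
      ring
    rw [commD_const_offDiag_mulVec, this, Pi.smul_apply, smul_eq_mul]
    ring
  calc ∑ k, ‖(commD (of fun k l => if k = l then 0 else c)
          (t • (Pi.single i 1 - Pi.single j 1)) *ᵥ v) k‖ ^ 2
      = (‖c‖ * ‖t‖) ^ 2 * (Fintype.card ι * ‖v i - v j‖ ^ 2 + 2 * ‖∑ l, v l‖ ^ 2) := by
        simp only [hCv, norm_mul, mul_pow, ← Finset.mul_sum]
        rw [sum_norm_sub_mul_single_sub_single_sq _ _ hij]
    _ ≤ ‖v i - v j‖ ^ 2 / 2 + ‖∑ l, v l‖ ^ 2 / Fintype.card ι := by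
        rw [div_add_div _ _ two_ne_zero hcard.ne', le_div_iff₀ (by positivity)]
        have : 0 ≤ Fintype.card ι * ‖v i - v j‖ ^ 2 + 2 * ‖∑ l, v l‖ ^ 2 := by positivity
        nlinarith
    _ ≤ ∑ k, ‖v k‖ ^ 2 := norm_sub_sq_div_two_add_norm_sum_sq_div_card_le v hij

theorem ncDist_const_offDiag {c : ℂ} {r : ℝ} (hr : 0 ≤ r)
    (hcr : Fintype.card ι * (‖c‖ * r) ^ 2 = 2) (hij : i ≠ j) :
    ncDist (of fun k l => if k = l then 0 else c) i j = ENNReal.ofReal r := by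
  have hcard : (0 : ℝ) < Fintype.card ι := Nat.cast_pos.mpr (Fintype.card_pos_iff.mpr ⟨i⟩)
  have hc : 0 < ‖c‖ := by
    refine (norm_nonneg c).lt_of_ne fun h => ?_
    simp [← h] at hcr
  refine le_antisymm (iSup₂_le fun a ha => ENNReal.ofReal_le_ofReal ?_) ?_
  · have := card_mul_sq_le_two_of_opNorm_commD_le_one ha hij
    rwa [← hcr, mul_le_mul_iff_right₀ hcard,
      pow_le_pow_iff_left₀ (by positivity) (by positivity) two_ne_zero,
      mul_le_mul_iff_right₀ hc] at this
  · refine le_iSup₂_of_le (((r / 2 : ℝ) : ℂ) • (Pi.single i 1 - Pi.single j 1))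
      (opNorm_commD_smul_single_sub_single_le_one ?_ hij) (le_of_eq ?_)
    · rw [Complex.norm_real, Real.norm_of_nonneg (by positivity)]
      nlinarith
    · simp [Pi.single_eq_of_ne hij, Pi.single_eq_of_ne hij.symm, abs_of_nonneg hr]

end CompleteGraph

theorem stmt8_general {n : ℕ} (w : ℝ) (hw : 0 < w)
    (D : Matrix (Fin n) (Fin n) ℂ)
    (hD : D = Matrix.of fun i j => if i = j then 0 else (((w⁻¹ : ℝ)) : ℂ))
    (i j : Fin n) (hij : i ≠ j) :
    ncDist D i j = ENNReal.ofReal (w * Real.sqrt (2 / (n : ℝ))) := by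
  have hn : (0 : ℝ) < n := Nat.cast_pos.mpr (Fin.pos i)
  subst hD
  refine ncDist_const_offDiag (by positivity) ?_ hij
  rw [Complex.norm_real, Real.norm_of_nonneg (by positivity), Fintype.card_fin,
    inv_mul_cancel_left₀ hw.ne', Real.sq_sqrt (by positivity)]
  field_simp

theorem stmt8 {n : ℕ} (hn : 2 ≤ n) (w : ℝ) (hw : 0 < w)
    (D : Matrix (Fin n) (Fin n) ℂ)
    (hD : D = Matrix.of fun i j => if i = j then 0 else (((w⁻¹ : ℝ)) : ℂ))
    (i j : Fin n) (hij : i ≠ j) :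
    ncDist D i j = ENNReal.ofReal (w * Real.sqrt (2 / (n : ℝ))) :=
  stmt8_general w hw D hD i j hij
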